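/- Let p ≥ 1 and let M̂ and M⋆ be real (n₁+n₂) × (m₁+m₂) matrices, decomposed into blocks M̂_{ij} and M⋆_{ij} of size n_i × m_j for i, j ∈ {1,2}. Suppose that rank(M̂) ≤ p, rank(M⋆) = p, rank(M⋆₁₁) = p (equivalently σ_p(M⋆₁₁) > 0), and that there exist ε > 0 and M > 0 with ε ≤ σ_p(M⋆₁₁)/2 such that for every (i,j) ≠ (2,2): ‖M̂_{ij} − M⋆_{ij}‖_F ≤ ε and ‖M⋆_{ij}‖_F ≤ M. Then ‖M̂₂₂ − M⋆₂₂‖_F ≤ 8·ε·M² / σ_p(M⋆₁₁)². -/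

import Mathlib

/-!
Choose a `p`-dimensional subspace `V` on which `M⋆₁₁` expands vectors by a factor close to
`σ = σ_p(M⋆₁₁)`; then `M̂₁₁` expands them by about `σ - ε ≥ σ / 2`. For a matrix `N` of rank at most
`p` whose top-left block is injective on `V`, the first block column maps `V` onto the whole column
space, so the second block column is the first one times a matrix `B` with columns in `V`. For the
factors `B̂`, `B⋆` of `M̂`, `M⋆` this gives `‖B̂‖ ≲ M / σ`, and
`M⋆₁₁ (B̂ - B⋆) = (M̂₁₂ - M⋆₁₂) - (M̂₁₁ - M⋆₁₁) B̂` gives `‖B̂ - B⋆‖ ≲ ε (1 + M / σ) / σ`.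
Finally `M̂₂₂ - M⋆₂₂ = (M̂₂₁ - M⋆₂₁) B̂ + M⋆₂₁ (B̂ - B⋆)`.
-/

open Matrix

/-- Euclidean norm of a finitely indexed real vector. -/
noncomputable def euclNorm {m : Type*} [Fintype m] (v : m → ℝ) : ℝ :=
  Real.sqrt (∑ i, v i ^ 2)

/-- The `p`-th largest singular value of a real matrix, via the Courant–Fischer
max–min characterization:
`σ_p(A) = max { r ≥ 0 | ∃ p-dimensional subspace V, ∀ x ∈ V, r‖x‖ ≤ ‖Ax‖ }`. -/
noncomputable def singularValue {n m : Type*} [Fintype n] [Fintype m] (p : ℕ)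
    (A : Matrix n m ℝ) : ℝ :=
  sSup {r : ℝ | 0 ≤ r ∧ ∃ V : Submodule ℝ (m → ℝ), Module.finrank ℝ V = p ∧
    ∀ x ∈ V, r * euclNorm x ≤ euclNorm (A.mulVec x)}

/-- Frobenius norm of a real matrix. -/
noncomputable def frobNorm {n m : Type*} [Fintype n] [Fintype m] (A : Matrix n m ℝ) : ℝ :=
  Real.sqrt (∑ i, ∑ j, A i j ^ 2)

section FrobeniusNorm

attribute [local instance] Matrix.frobeniusNormedAddCommGroup

variable {l m n : Type*} [Fintype l] [Fintype m] [Fintype n]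

theorem euclNorm_eq_norm (v : m → ℝ) : euclNorm v = ‖WithLp.toLp 2 v‖ := by
  simp [euclNorm, EuclideanSpace.norm_eq]

theorem frobNorm_eq_norm (A : Matrix n m ℝ) : frobNorm A = ‖A‖ := by
  simp [frobNorm, frobenius_norm_def, Real.sqrt_eq_rpow]

theorem euclNorm_nonneg (v : m → ℝ) : 0 ≤ euclNorm v := Real.sqrt_nonneg _

theorem frobNorm_nonneg (A : Matrix n m ℝ) : 0 ≤ frobNorm A := Real.sqrt_nonneg _

theorem euclNorm_eq_zero {v : m → ℝ} : euclNorm v = 0 ↔ v = 0 := by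
  simp [euclNorm_eq_norm]

theorem frobNorm_add_le (A B : Matrix n m ℝ) : frobNorm (A + B) ≤ frobNorm A + frobNorm B := by
  simpa only [frobNorm_eq_norm] using norm_add_le A B

theorem frobNorm_sub_le (A B : Matrix n m ℝ) : frobNorm (A - B) ≤ frobNorm A + frobNorm B := by
  simpa only [frobNorm_eq_norm] using norm_sub_le A B

theorem frobNorm_le_add_frobNorm_sub (A B : Matrix n m ℝ) :
    frobNorm A ≤ frobNorm B + frobNorm (A - B) := by
  simpa only [frobNorm_eq_norm] using norm_le_norm_add_norm_sub' A B

theorem frobNorm_mul_le (A : Matrix l m ℝ) (B : Matrix m n ℝ) :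
    frobNorm (A * B) ≤ frobNorm A * frobNorm B := by
  simpa only [frobNorm_eq_norm] using frobenius_norm_mul A B

theorem euclNorm_mulVec_le (A : Matrix n m ℝ) (x : m → ℝ) :
    euclNorm (A *ᵥ x) ≤ frobNorm A * euclNorm x := by
  simpa [euclNorm_eq_norm, frobNorm_eq_norm, ← replicateCol_mulVec,
    frobenius_norm_replicateCol] using frobenius_norm_mul A (replicateCol Unit x)

theorem sq_frobNorm_eq_sum_sq_euclNorm_col (A : Matrix n m ℝ) :
    frobNorm A ^ 2 = ∑ j, euclNorm (Aᵀ j) ^ 2 := by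
  rw [frobNorm, Real.sq_sqrt (by positivity), Finset.sum_comm]
  simp only [euclNorm, Real.sq_sqrt (Finset.sum_nonneg fun _ _ => sq_nonneg _), transpose_apply]

end FrobeniusNorm

def Matrix.IsBoundedBelowOn {n m : Type*} [Fintype n] [Fintype m] (A : Matrix n m ℝ)
    (V : Submodule ℝ (m → ℝ)) (s : ℝ) : Prop :=
  ∀ x ∈ V, s * euclNorm x ≤ euclNorm (A *ᵥ x)

namespace Matrix.IsBoundedBelowOn

variable {l m n : Type*} [Fintype l] [Fintype m] [Fintype n] {A : Matrix n m ℝ}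
  {V : Submodule ℝ (m → ℝ)} {s : ℝ}

theorem disjoint_ker (hA : A.IsBoundedBelowOn V s) (hs : 0 < s) :
    Disjoint V (LinearMap.ker A.mulVecLin) := by
  refine Submodule.disjoint_def.2 fun x hxV hxK => ?_
  have hAx : A *ᵥ x = 0 := hxK
  have hx := hA x hxV
  rw [hAx, euclNorm_eq_zero.2 rfl] at hx
  exact euclNorm_eq_zero.1
    (le_antisymm (nonpos_of_mul_nonpos_right hx hs) (euclNorm_nonneg x))

theorem sub {Â : Matrix n m ℝ} {ε : ℝ} (hA : A.IsBoundedBelowOn V s)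
    (hε : frobNorm (Â - A) ≤ ε) : Â.IsBoundedBelowOn V (s - ε) := by
  intro x hx
  have hsplit : euclNorm (A *ᵥ x) ≤ euclNorm (Â *ᵥ x) + euclNorm ((Â - A) *ᵥ x) := by
    rw [euclNorm_eq_norm, euclNorm_eq_norm, euclNorm_eq_norm, sub_mulVec]
    simpa using norm_le_norm_add_norm_sub (WithLp.toLp 2 (Â *ᵥ x)) (WithLp.toLp 2 (A *ᵥ x))
  have hpert : euclNorm ((Â - A) *ᵥ x) ≤ ε * euclNorm x :=
    (euclNorm_mulVec_le _ x).trans (mul_le_mul_of_nonneg_right hε (euclNorm_nonneg x))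
  linarith [hA x hx]

theorem mul_frobNorm_le (hA : A.IsBoundedBelowOn V s) (hs : 0 ≤ s) {B : Matrix m l ℝ}
    (hB : ∀ j, Bᵀ j ∈ V) : s * frobNorm B ≤ frobNorm (A * B) := by
  refine le_of_pow_le_pow_left₀ two_ne_zero (frobNorm_nonneg _) ?_
  rw [mul_pow, sq_frobNorm_eq_sum_sq_euclNorm_col, sq_frobNorm_eq_sum_sq_euclNorm_col,
    Finset.mul_sum]
  gcongr with j
  rw [← mul_pow]
  exact pow_le_pow_left₀ (mul_nonneg hs (euclNorm_nonneg _)) (hA _ (hB j)) 2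

end Matrix.IsBoundedBelowOn

open Module

namespace Matrix

variable {K ι n₁ n₂ m₁ m₂ : Type*} [Field K] [Fintype m₁] [Fintype m₂]

/-- `N.toCols₁` maps `V` onto the column space of `N`, the image having dimension
`dim V ≥ rank N`. -/
theorem exists_mul_toCols₁_eq_toCols₂ (N : Matrix ι (m₁ ⊕ m₂) K) (V : Submodule K (m₁ → K))
    (hV : Disjoint V (LinearMap.ker N.toCols₁.mulVecLin)) (hrank : N.rank ≤ finrank K V) :
    ∃ B : Matrix m₁ m₂ K, (∀ j, Bᵀ j ∈ V) ∧ N.toCols₁ * B = N.toCols₂ := by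
  classical
  have hfinrank : finrank K (V.map N.toCols₁.mulVecLin) = finrank K V := by
    rw [← LinearMap.range_domRestrict]
    exact LinearMap.finrank_range_of_inj (LinearMap.injective_domRestrict_iff.2 hV)
  have hle : V.map N.toCols₁.mulVecLin ≤ LinearMap.range N.mulVecLin := by
    rintro _ ⟨x, -, rfl⟩
    exact ⟨Sum.elim x 0, by ext i; simp [toCols₁, mulVec, dotProduct]⟩
  have heq : V.map N.toCols₁.mulVecLin = LinearMap.range N.mulVecLin :=
    Submodule.eq_of_le_of_finrank_le hle (hfinrank ▸ hrank)
  have hcol : ∀ j, ∃ b ∈ V, N.toCols₁ *ᵥ b = N.toCols₂ᵀ j := by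
    intro j
    have hj : N.toCols₂ᵀ j ∈ LinearMap.range N.mulVecLin :=
      ⟨Pi.single (Sum.inr j) 1, by ext i; simp [toCols₂]⟩
    rw [← heq] at hj
    obtain ⟨b, hb, hbj⟩ := hj
    exact ⟨b, hb, hbj⟩
  choose b hbV hb using hcol
  refine ⟨(of b)ᵀ, hbV, ?_⟩
  ext i j
  simpa [mul_apply, mulVec, dotProduct] using congr_fun (hb j) i

theorem exists_mul_toBlocks₁₁_eq_toBlocks₁₂ (N : Matrix (n₁ ⊕ n₂) (m₁ ⊕ m₂) K)
    (V : Submodule K (m₁ → K)) (hV : Disjoint V (LinearMap.ker N.toBlocks₁₁.mulVecLin))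
    (hrank : N.rank ≤ finrank K V) :
    ∃ B : Matrix m₁ m₂ K, (∀ j, Bᵀ j ∈ V) ∧
      N.toBlocks₁₁ * B = N.toBlocks₁₂ ∧ N.toBlocks₂₁ * B = N.toBlocks₂₂ := by
  have hker : LinearMap.ker N.toCols₁.mulVecLin ≤ LinearMap.ker N.toBlocks₁₁.mulVecLin :=
    fun x hx => by ext i; exact congr_fun (hx : N.toCols₁ *ᵥ x = 0) (Sum.inl i)
  obtain ⟨B, hBV, hB⟩ := exists_mul_toCols₁_eq_toCols₂ N V (hV.mono_right hker) hrank
  refine ⟨B, hBV, ?_, ?_⟩ <;> ext i j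
  · exact congr_fun₂ hB (Sum.inl i) j
  · exact congr_fun₂ hB (Sum.inr i) j

end Matrix

section SingularValue

variable {n m : Type*} [Fintype n] [Fintype m]

theorem singularValue_eq_sSup (p : ℕ) (A : Matrix n m ℝ) : singularValue p A =
    sSup {r | 0 ≤ r ∧ ∃ V : Submodule ℝ (m → ℝ), finrank ℝ V = p ∧ A.IsBoundedBelowOn V r} :=
  rfl

theorem singularValue_zero (A : Matrix n m ℝ) : singularValue 0 A = 0 := by
  refine Real.sSup_of_not_bddAbove fun ⟨b, hb⟩ => ?_
  have hmem : max b 0 + 1 ∈ {r | 0 ≤ r ∧ ∃ V : Submodule ℝ (m → ℝ), finrank ℝ V = 0 ∧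
      A.IsBoundedBelowOn V r} := by
    refine ⟨by positivity, ⊥, finrank_bot ℝ _, fun x hx => ?_⟩
    simp [(Submodule.mem_bot ℝ).1 hx, euclNorm]
  linarith [hb hmem, le_max_left b 0]

theorem singularValue_le_frobNorm (p : ℕ) (A : Matrix n m ℝ) : singularValue p A ≤ frobNorm A := by
  rcases Nat.eq_zero_or_pos p with rfl | hp
  · exact (singularValue_zero A).trans_le (frobNorm_nonneg A)
  refine Real.sSup_le ?_ (frobNorm_nonneg A)
  rintro r ⟨-, V, hV, hA⟩
  obtain ⟨x, hxV, hx⟩ := Submodule.exists_mem_ne_zero_of_ne_bot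
    (Submodule.one_le_finrank_iff.1 (hV ▸ hp))
  have hx : 0 < euclNorm x := (euclNorm_nonneg x).lt_of_ne' (euclNorm_eq_zero.not.2 hx)
  exact le_of_mul_le_mul_right ((hA x hxV).trans (euclNorm_mulVec_le A x)) hx

theorem exists_isBoundedBelowOn_of_lt_singularValue {p : ℕ} {A : Matrix n m ℝ} {r : ℝ}
    (hr : 0 ≤ r) (h : r < singularValue p A) :
    ∃ s, r < s ∧ ∃ V : Submodule ℝ (m → ℝ), finrank ℝ V = p ∧ A.IsBoundedBelowOn V s := by
  rw [singularValue_eq_sSup] at h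
  have hne : {r | 0 ≤ r ∧ ∃ V : Submodule ℝ (m → ℝ), finrank ℝ V = p ∧
      A.IsBoundedBelowOn V r}.Nonempty := by
    refine Set.nonempty_iff_ne_empty.2 fun hempty => ?_
    rw [hempty, Real.sSup_empty] at h
    exact h.not_ge hr
  obtain ⟨s, ⟨-, V, hV, hA⟩, hrs⟩ := exists_lt_of_lt_csSup hne h
  exact ⟨s, hrs, V, hV, hA⟩

end SingularValue

theorem frobNorm_toBlocks₂₂_sub_le {n₁ n₂ m₁ m₂ : Type*} [Fintype n₁] [Fintype n₂] [Fintype m₁]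
    [Fintype m₂] (Mhat Mstar : Matrix (n₁ ⊕ n₂) (m₁ ⊕ m₂) ℝ) (V : Submodule ℝ (m₁ → ℝ))
    {s ε : ℝ} (hεs : ε < s) (hV : Mstar.toBlocks₁₁.IsBoundedBelowOn V s)
    (hrank_hat : Mhat.rank ≤ finrank ℝ V) (hrank_star : Mstar.rank ≤ finrank ℝ V)
    (hdiff11 : frobNorm (Mhat.toBlocks₁₁ - Mstar.toBlocks₁₁) ≤ ε)
    (hdiff12 : frobNorm (Mhat.toBlocks₁₂ - Mstar.toBlocks₁₂) ≤ ε)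
    (hdiff21 : frobNorm (Mhat.toBlocks₂₁ - Mstar.toBlocks₂₁) ≤ ε) :
    frobNorm (Mhat.toBlocks₂₂ - Mstar.toBlocks₂₂) ≤
      ε * ((frobNorm Mstar.toBlocks₁₂ + ε) / (s - ε)) +
        frobNorm Mstar.toBlocks₂₁ * (ε * (1 + (frobNorm Mstar.toBlocks₁₂ + ε) / (s - ε)) / s) := by
  have hε : 0 ≤ ε := (frobNorm_nonneg _).trans hdiff11
  have hs : 0 < s := hε.trans_lt hεs
  have hV_hat := hV.sub hdiff11
  obtain ⟨Bh, hBhV, hBh₁, hBh₂⟩ := Mhat.exists_mul_toBlocks₁₁_eq_toBlocks₁₂ V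
    (hV_hat.disjoint_ker (sub_pos.2 hεs)) hrank_hat
  obtain ⟨Bs, hBsV, hBs₁, hBs₂⟩ := Mstar.exists_mul_toBlocks₁₁_eq_toBlocks₁₂ V
    (hV.disjoint_ker hs) hrank_star
  have hb : frobNorm Bh ≤ (frobNorm Mstar.toBlocks₁₂ + ε) / (s - ε) := by
    rw [le_div_iff₀' (sub_pos.2 hεs)]
    calc (s - ε) * frobNorm Bh ≤ frobNorm Mhat.toBlocks₁₂ :=
          hBh₁ ▸ hV_hat.mul_frobNorm_le (sub_pos.2 hεs).le hBhV
      _ ≤ frobNorm Mstar.toBlocks₁₂ + ε :=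
          (frobNorm_le_add_frobNorm_sub _ _).trans (by gcongr)
  have hd : frobNorm (Bh - Bs) ≤ ε * (1 + frobNorm Bh) / s := by
    rw [le_div_iff₀' hs]
    have hAD : Mstar.toBlocks₁₁ * (Bh - Bs) = (Mhat.toBlocks₁₂ - Mstar.toBlocks₁₂) -
        (Mhat.toBlocks₁₁ - Mstar.toBlocks₁₁) * Bh := by
      rw [Matrix.mul_sub, hBs₁, Matrix.sub_mul, hBh₁]
      abel
    calc s * frobNorm (Bh - Bs) ≤ frobNorm (Mstar.toBlocks₁₁ * (Bh - Bs)) :=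
          hV.mul_frobNorm_le hs.le fun j => V.sub_mem (hBhV j) (hBsV j)
      _ ≤ ε + ε * frobNorm Bh := by
          rw [hAD]
          refine (frobNorm_sub_le _ _).trans (add_le_add hdiff12 ?_)
          exact (frobNorm_mul_le _ _).trans
            (mul_le_mul_of_nonneg_right hdiff11 (frobNorm_nonneg _))
      _ = ε * (1 + frobNorm Bh) := by ring
  have h22 : Mhat.toBlocks₂₂ - Mstar.toBlocks₂₂ =
      (Mhat.toBlocks₂₁ - Mstar.toBlocks₂₁) * Bh + Mstar.toBlocks₂₁ * (Bh - Bs) := by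
    rw [Matrix.mul_sub, hBs₂, Matrix.sub_mul, hBh₂]
    abel
  calc frobNorm (Mhat.toBlocks₂₂ - Mstar.toBlocks₂₂)
      ≤ frobNorm (Mhat.toBlocks₂₁ - Mstar.toBlocks₂₁) * frobNorm Bh +
          frobNorm Mstar.toBlocks₂₁ * frobNorm (Bh - Bs) := by
        rw [h22]
        exact (frobNorm_add_le _ _).trans (add_le_add (frobNorm_mul_le _ _) (frobNorm_mul_le _ _))
    _ ≤ _ := by
        refine add_le_add (mul_le_mul hdiff21 hb (frobNorm_nonneg _) hε)
          (mul_le_mul_of_nonneg_left (hd.trans ?_) (frobNorm_nonneg _))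
        gcongr

/-- The supremum defining `σ` need not be attained, so the proof works with an expansion factor
`s > 24σ/25` in place of `σ`; at `s = σ` the constant would be `7`. -/
theorem extrapolation_bound_le {ε σ s M a c : ℝ} (hε : 0 < ε) (hεσ : ε ≤ σ / 2) (hσM : σ ≤ M)
    (hs : 24 / 25 * σ < s) (ha₀ : 0 ≤ a) (ha : a ≤ M) (hc₀ : 0 ≤ c) (hc : c ≤ M) :
    ε * ((a + ε) / (s - ε)) + c * (ε * (1 + (a + ε) / (s - ε)) / s) ≤
      8 * ε * M ^ 2 / σ ^ 2 := by
  have hσ : 0 < σ := by linarith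
  set u := M / σ with hu_def
  have hu : 1 ≤ u := (one_le_div hσ).2 hσM
  have huσ : u * σ = M := div_mul_cancel₀ M hσ.ne'
  have hb : (a + ε) / (s - ε) ≤ 75 / 23 * u := by
    rw [div_le_iff₀ (by linarith)]
    nlinarith [mul_le_mul_of_nonneg_left (show 23 / 50 * σ ≤ s - ε by linarith)
      (show 0 ≤ u by linarith)]
  have hb₀ : 0 ≤ (a + ε) / (s - ε) := div_nonneg (by linarith) (by linarith)
  have hεu : ε * u ≤ ε * u ^ 2 := by gcongr; nlinarith
  calc ε * ((a + ε) / (s - ε)) + c * (ε * (1 + (a + ε) / (s - ε)) / s)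
      ≤ ε * (75 / 23 * u) + c * (ε * (1 + 75 / 23 * u) / (24 / 25 * σ)) := by gcongr
    _ = ε * (75 / 23 * u) + 25 / 24 * (c / σ) * (ε * (1 + 75 / 23 * u)) := by ring
    _ ≤ ε * (75 / 23 * u) + 25 / 24 * u * (ε * (1 + 75 / 23 * u)) := by
        gcongr
        exact div_le_div_of_nonneg_right hc hσ.le
    _ ≤ 8 * ε * u ^ 2 := by nlinarith
    _ = 8 * ε * M ^ 2 / σ ^ 2 := by rw [hu_def]; ring

theorem matrix_completion_block_extrapolation_general
    {n₁ n₂ m₁ m₂ p : ℕ}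
    (Mhat Mstar : Matrix (Fin n₁ ⊕ Fin n₂) (Fin m₁ ⊕ Fin m₂) ℝ)
    (hrank_hat : Mhat.rank ≤ p)
    (hrank_star : Mstar.rank = p)
    (ε M : ℝ) (hε : 0 < ε)
    (hεσ : ε ≤ singularValue p (Mstar.toBlocks₁₁) / 2)
    (hdiff11 : frobNorm (Mhat.toBlocks₁₁ - Mstar.toBlocks₁₁) ≤ ε)
    (hdiff12 : frobNorm (Mhat.toBlocks₁₂ - Mstar.toBlocks₁₂) ≤ ε)
    (hdiff21 : frobNorm (Mhat.toBlocks₂₁ - Mstar.toBlocks₂₁) ≤ ε)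
    (hbound11 : frobNorm (Mstar.toBlocks₁₁) ≤ M)
    (hbound12 : frobNorm (Mstar.toBlocks₁₂) ≤ M)
    (hbound21 : frobNorm (Mstar.toBlocks₂₁) ≤ M) :
    frobNorm (Mhat.toBlocks₂₂ - Mstar.toBlocks₂₂) ≤
      8 * ε * M ^ 2 / (singularValue p (Mstar.toBlocks₁₁)) ^ 2 := by
  set σ := singularValue p Mstar.toBlocks₁₁
  have hσM : σ ≤ M := (singularValue_le_frobNorm p _).trans hbound11
  obtain ⟨s, hs, V, hVp, hV⟩ := exists_isBoundedBelowOn_of_lt_singularValue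
    (p := p) (A := Mstar.toBlocks₁₁) (r := 24 / 25 * σ) (by linarith) (by linarith)
  exact (frobNorm_toBlocks₂₂_sub_le Mhat Mstar V (by linarith) hV (hVp ▸ hrank_hat)
    (hVp ▸ hrank_star.le) hdiff11 hdiff12 hdiff21).trans
    (extrapolation_bound_le hε hεσ hσM hs (frobNorm_nonneg _) hbound12 (frobNorm_nonneg _) hbound21)

/-- Extrapolation guarantee for four-block matrix completion:
if `rank M̂ ≤ p`, `rank M⋆ = p`, `rank M⋆₁₁ = p` (equivalently `σ_p(M⋆₁₁) > 0`), and on all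
blocks `(i,j) ≠ (2,2)` we have `‖M̂ᵢⱼ − M⋆ᵢⱼ‖_F ≤ ε ≤ σ_p(M⋆₁₁)/2` and `‖M⋆ᵢⱼ‖_F ≤ M`,
then `‖M̂₂₂ − M⋆₂₂‖_F ≤ 8 ε M² / σ_p(M⋆₁₁)²`. -/
theorem matrix_completion_block_extrapolation
    {n₁ n₂ m₁ m₂ p : ℕ} (hp : 1 ≤ p)
    (Mhat Mstar : Matrix (Fin n₁ ⊕ Fin n₂) (Fin m₁ ⊕ Fin m₂) ℝ)
    (hrank_hat : Mhat.rank ≤ p)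
    (hrank_star : Mstar.rank = p)
    (hrank_star11 : (Mstar.toBlocks₁₁).rank = p)
    (ε M : ℝ) (hε : 0 < ε) (hM : 0 < M)
    (hεσ : ε ≤ singularValue p (Mstar.toBlocks₁₁) / 2)
    (hdiff11 : frobNorm (Mhat.toBlocks₁₁ - Mstar.toBlocks₁₁) ≤ ε)
    (hdiff12 : frobNorm (Mhat.toBlocks₁₂ - Mstar.toBlocks₁₂) ≤ ε)
    (hdiff21 : frobNorm (Mhat.toBlocks₂₁ - Mstar.toBlocks₂₁) ≤ ε)
    (hbound11 : frobNorm (Mstar.toBlocks₁₁) ≤ M)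
    (hbound12 : frobNorm (Mstar.toBlocks₁₂) ≤ M)
    (hbound21 : frobNorm (Mstar.toBlocks₂₁) ≤ M) :
    frobNorm (Mhat.toBlocks₂₂ - Mstar.toBlocks₂₂) ≤
      8 * ε * M ^ 2 / (singularValue p (Mstar.toBlocks₁₁)) ^ 2 :=
  matrix_completion_block_extrapolation_general Mhat Mstar hrank_hat hrank_star ε M hε hεσ hdiff11
    hdiff12 hdiff21 hbound11 hbound12 hbound21
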